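/- arXiv:2209.08047 — 2 statements merged into one kernel-verified Lean document; each statement's English description precedes it below -/
import Mathlib

section
/- Let ℓ be a prime and p ≠ ℓ an odd prime. Then: (1) p is H⁻-irregular if and only if p is B-irregular or ord_p(ℓ) < (p−1)/2; (2) p is H⁺-irregular if and only if p is B-irregular or ord_p(ℓ) is even and not equal to p − 1; (3) p is H-irregular if and only if p is H⁻-irregular or H⁺-irregular; (4) if p is B-regular, p ≡ 3 (mod 4) and ord_p(ℓ) = (p−1)/2, then p is both H⁻-regular and H⁺-regular. -/
open Finset

section PadicAux

lemma bernoulli_2k_ne_zero {k : ℕ} (hk : k ≠ 0) : bernoulli (2 * k) ≠ 0 := by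
  intro h
  have hs := hasSum_zeta_nat hk
  rw [h] at hs
  simp only [Rat.cast_zero, mul_zero, zero_div] at hs
  have h1 : (1 : ℝ) / ((1 : ℕ) : ℝ) ^ (2 * k) ≤ 0 :=
    le_hasSum hs 1 (fun j _ => by positivity)
  norm_num at h1

variable {p : ℕ} [hp : Fact p.Prime]

lemma one_le_val_iff {q : ℚ} (hq : q ≠ 0) :
    1 ≤ padicValRat p q ↔ padicNorm p q ≤ (p : ℚ)⁻¹ := by
  rw [padicNorm.eq_zpow_of_nonzero hq, ← zpow_neg_one,
    zpow_le_zpow_iff_right₀ (by exact_mod_cast hp.out.one_lt : (1:ℚ) < p), neg_le_neg_iff]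

lemma zero_le_val_iff {q : ℚ} (hq : q ≠ 0) :
    0 ≤ padicValRat p q ↔ padicNorm p q ≤ 1 := by
  rw [padicNorm.eq_zpow_of_nonzero hq, ← zpow_zero ((p : ℚ)),
    zpow_le_zpow_iff_right₀ (by exact_mod_cast hp.out.one_lt : (1:ℚ) < p)]
  omega

lemma dvd_sum_pow (m : ℕ) (hm : m < p - 1) : p ∣ ∑ k ∈ range p, k ^ m := by
  haveI : NeZero p := ⟨hp.out.ne_zero⟩
  rw [← ZMod.natCast_eq_zero_iff]
  push_cast
  have h1 : ∑ k ∈ range p, ((k : ZMod p)) ^ m = ∑ x : ZMod p, x ^ m := by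
    refine Finset.sum_nbij' (fun i => (i : ZMod p)) (fun x => x.val) ?_ ?_ ?_ ?_ ?_
    · intro a _; exact Finset.mem_univ _
    · intro x _; exact Finset.mem_range.mpr (ZMod.val_lt x)
    · intro a ha; exact ZMod.val_cast_of_lt (Finset.mem_range.mp ha)
    · intro x _; exact ZMod.natCast_zmod_val x
    · intro a _; rfl
  rw [h1]
  have := FiniteField.sum_pow_lt_card_sub_one (K := ZMod p) m (by rwa [ZMod.card])
  exact this

lemma padicNorm_nat_le_one (n : ℕ) : padicNorm p n ≤ 1 := padicNorm.of_nat n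

lemma padicNorm_bernoulli_le_one (hodd : p ≠ 2) :
    ∀ m : ℕ, m ≤ p - 3 → padicNorm p (bernoulli m) ≤ 1 := by
  intro m
  induction m using Nat.strong_induction_on with
  | _ m IH =>
    intro hm
    match m, hm with
    | 0, _ => simp
    | 1, _ =>
      rw [bernoulli_one]
      have h2 : padicNorm p (2 : ℚ) = 1 := by
        have := padicNorm.nat_eq_one_iff (p := p) 2
        simp only [Nat.cast_ofNat] at this
        rw [this]
        intro hd
        exact hodd ((Nat.prime_dvd_prime_iff_eq hp.out Nat.prime_two).mp hd)
      rw [show (-1/2 : ℚ) = -1 / 2 from rfl, padicNorm.div, h2]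
      simp [padicNorm.neg]
    | (m + 2), hm =>
      set M := m + 2 with hM
      have hp5 : 5 ≤ p := by omega
      have hMlt : M < p - 1 := by omega
      -- Faulhaber
      have hF := sum_range_pow p M
      rw [Finset.sum_range_succ] at hF
      have hchoose : ((M + 1).choose M : ℚ) = (M + 1 : ℚ) := by
        rw [Nat.choose_succ_self_right]; push_cast; ring
      have hM1 : ((M : ℚ) + 1) ≠ 0 := by positivity
      have hlast : bernoulli M * ((M + 1).choose M) * (p : ℚ) ^ (M + 1 - M) / (M + 1) =
          bernoulli M * p := by
        rw [hchoose]
        have : M + 1 - M = 1 := by omega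
        rw [this, pow_one]
        field_simp
      rw [hlast] at hF
      have key : (bernoulli M : ℚ) * p =
          (∑ k ∈ range p, (k : ℚ) ^ M) -
            ∑ i ∈ range M, bernoulli i * ((M + 1).choose i) * (p : ℚ) ^ (M + 1 - i) / (M + 1) := by
        rw [hF]; ring
      have hnorm : padicNorm p (bernoulli M * p) ≤ (p : ℚ)⁻¹ := by
        rw [key]
        refine le_trans padicNorm.sub (max_le ?_ ?_)
        · -- the power sum
          have hdvd : p ∣ ∑ k ∈ range p, k ^ M := dvd_sum_pow M hMlt
          have hzd : ((p ^ 1 : ℕ) : ℤ) ∣ ((∑ k ∈ range p, k ^ M : ℕ) : ℤ) := by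
            rw [pow_one]; exact_mod_cast hdvd
          have h3 := (padicNorm.dvd_iff_norm_le (p := p) (n := 1)
            (z := ((∑ k ∈ range p, k ^ M : ℕ) : ℤ))).mp hzd
          have hc : ((((∑ k ∈ range p, k ^ M : ℕ) : ℤ)) : ℚ) = ∑ k ∈ range p, (k : ℚ) ^ M := by
            push_cast; ring
          rw [hc] at h3
          refine le_trans h3 ?_
          norm_num
        · refine padicNorm.sum_le' (fun i hi => ?_) (by positivity)
          have hiM : i < M := Finset.mem_range.mp hi
          have hIH : padicNorm p (bernoulli i) ≤ 1 := IH i hiM (by omega)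
          have hpow : (p : ℚ) ^ (M + 1 - i) = (p : ℚ) * ((p ^ (M - i) : ℕ) : ℚ) := by
            push_cast
            rw [← pow_succ']
            congr 1
            omega
          have hm1 : padicNorm p ((M : ℚ) + 1) = 1 := by
            have : ((M : ℚ) + 1) = ((M + 1 : ℕ) : ℚ) := by push_cast; ring
            rw [this, padicNorm.nat_eq_one_iff]
            intro hd
            have := Nat.le_of_dvd (by omega) hd
            omega
          rw [hpow, padicNorm.div, padicNorm.mul, padicNorm.mul, padicNorm.mul, hm1,
            padicNorm.padicNorm_p_of_prime]
          have h1 : padicNorm p (((M + 1).choose i : ℚ)) ≤ 1 := by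
            exact_mod_cast padicNorm.of_nat ((M + 1).choose i)
          have h2 : padicNorm p (((p ^ (M - i) : ℕ) : ℚ)) ≤ 1 := padicNorm.of_nat _
          have hnn1 := padicNorm.nonneg (p := p) (bernoulli i : ℚ)
          have hnn2 := padicNorm.nonneg (p := p) (((M + 1).choose i : ℚ))
          have hnn3 := padicNorm.nonneg (p := p) (((p ^ (M - i) : ℕ) : ℚ))
          have hpinv : (0:ℚ) < (p : ℚ)⁻¹ := by
            have : (0:ℚ) < p := by exact_mod_cast hp.out.pos
            positivity
          rw [div_one]
          have hab : padicNorm p (bernoulli i : ℚ) * padicNorm p (((M + 1).choose i : ℚ)) ≤ 1 :=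
            mul_le_one₀ hIH hnn2 h1
          have habd : padicNorm p (bernoulli i : ℚ) * padicNorm p (((M + 1).choose i : ℚ)) *
              padicNorm p (((p ^ (M - i) : ℕ) : ℚ)) ≤ 1 :=
            mul_le_one₀ hab hnn3 h2
          calc padicNorm p (bernoulli i : ℚ) * padicNorm p (((M + 1).choose i : ℚ)) *
              ((p:ℚ)⁻¹ * padicNorm p (((p ^ (M - i) : ℕ) : ℚ)))
              = (padicNorm p (bernoulli i : ℚ) * padicNorm p (((M + 1).choose i : ℚ)) *
                padicNorm p (((p ^ (M - i) : ℕ) : ℚ))) * (p:ℚ)⁻¹ := by ring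
            _ ≤ 1 * (p:ℚ)⁻¹ := mul_le_mul_of_nonneg_right habd (le_of_lt hpinv)
            _ = (p:ℚ)⁻¹ := one_mul _
      rw [padicNorm.mul, padicNorm.padicNorm_p_of_prime] at hnorm
      have hppos : (0:ℚ) < (p : ℚ)⁻¹ := by
        have : (0:ℚ) < p := by exact_mod_cast hp.out.pos
        positivity
      calc padicNorm p (bernoulli M)
          = padicNorm p (bernoulli M) * (p:ℚ)⁻¹ * ((p:ℚ)⁻¹)⁻¹ := by
            field_simp
        _ ≤ (p:ℚ)⁻¹ * ((p:ℚ)⁻¹)⁻¹ := by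
            apply mul_le_mul_of_nonneg_right hnorm (by positivity)
        _ = 1 := by field_simp

lemma val_bernoulli_nonneg (hodd : p ≠ 2) {m : ℕ} (hm : m ≤ p - 3) :
    0 ≤ padicValRat p (bernoulli m) := by
  by_cases hB : (bernoulli m : ℚ) = 0
  · rw [hB, padicValRat.zero]
  · exact (zero_le_val_iff hB).mpr (padicNorm_bernoulli_le_one hodd m hm)

lemma val_int_nonneg (z : ℤ) : 0 ≤ padicValRat p (z : ℚ) := by
  rw [padicValRat.of_int]
  exact Int.natCast_nonneg _

lemma one_le_val_int_iff {z : ℤ} (hz : z ≠ 0) :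
    1 ≤ padicValRat p (z : ℚ) ↔ (p : ℤ) ∣ z := by
  rw [padicValRat.of_int]
  rw [show ((p : ℤ) ∣ z) ↔ ((p : ℤ) ^ 1 ∣ z) by rw [pow_one]]
  rw [padicValInt_dvd_iff]
  simp only [hz, false_or]
  exact_mod_cast Iff.rfl

lemma val_H {k : ℕ} (hk1 : 1 ≤ k) (hk2 : k ≤ (p - 3) / 2) {c : ℚ} (hc : c ≠ 0) :
    padicValRat p (c * bernoulli (2 * k) / (2 * (k : ℚ))) =
      padicValRat p c + padicValRat p (bernoulli (2 * k)) := by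
  have hB : (bernoulli (2 * k) : ℚ) ≠ 0 := bernoulli_2k_ne_zero (by omega)
  have h2k : (2 * (k : ℚ)) ≠ 0 := by
    have : (0:ℚ) < (k : ℚ) := by exact_mod_cast hk1
    positivity
  have hcast : (2 * (k : ℚ)) = ((2 * k : ℕ) : ℚ) := by push_cast; ring
  rw [padicValRat.div (mul_ne_zero hc hB) h2k, padicValRat.mul hc hB, hcast,
    padicValRat.of_nat]
  have hnd : ¬ p ∣ 2 * k := by
    intro hd
    have h1 := Nat.le_of_dvd (by omega) hd
    omega
  rw [padicValNat.eq_zero_of_not_dvd hnd]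
  push_cast
  ring

lemma cond_minus {ℓ k : ℕ} (hℓ : 2 ≤ ℓ) (hk : 1 ≤ k) :
    1 ≤ padicValRat p (1 - (ℓ : ℚ) ^ k) ↔ (ℓ : ZMod p) ^ k = 1 := by
  have hpow : 2 ≤ ℓ ^ k := le_trans hℓ (Nat.le_self_pow (by omega) ℓ)
  have hcast : ((1 - (ℓ : ℤ) ^ k : ℤ) : ℚ) = 1 - (ℓ : ℚ) ^ k := by push_cast; ring
  have hpz : ((ℓ ^ k : ℕ) : ℤ) = (ℓ : ℤ) ^ k := by push_cast; ring
  have h2 : (2 : ℤ) ≤ (ℓ : ℤ) ^ k := by rw [← hpz]; exact_mod_cast hpow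
  have hzne : (1 - (ℓ : ℤ) ^ k : ℤ) ≠ 0 := by omega
  rw [← hcast, one_le_val_int_iff hzne, ← ZMod.intCast_zmod_eq_zero_iff_dvd]
  push_cast
  rw [sub_eq_zero, eq_comm]

lemma cond_plus {ℓ k : ℕ} (hℓ : 2 ≤ ℓ) (hk : 1 ≤ k) :
    1 ≤ padicValRat p (1 + (ℓ : ℚ) ^ k) ↔ (ℓ : ZMod p) ^ k = -1 := by
  have hcast : ((1 + (ℓ : ℤ) ^ k : ℤ) : ℚ) = 1 + (ℓ : ℚ) ^ k := by push_cast; ring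
  have hpz : ((ℓ ^ k : ℕ) : ℤ) = (ℓ : ℤ) ^ k := by push_cast; ring
  have h2 : (0 : ℤ) ≤ (ℓ : ℤ) ^ k := by positivity
  have hzne : (1 + (ℓ : ℤ) ^ k : ℤ) ≠ 0 := by omega
  rw [← hcast, one_le_val_int_iff hzne, ← ZMod.intCast_zmod_eq_zero_iff_dvd]
  push_cast
  constructor
  · intro h; linear_combination h
  · intro h; rw [h]; ring

lemma c_minus_ne_zero {ℓ k : ℕ} (hℓ : 2 ≤ ℓ) (hk : 1 ≤ k) :
    (1 - (ℓ : ℚ) ^ k) ≠ 0 := by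
  have hpow : 2 ≤ ℓ ^ k := le_trans hℓ (Nat.le_self_pow (by omega) ℓ)
  have : (2 : ℚ) ≤ (ℓ : ℚ) ^ k := by exact_mod_cast hpow
  intro h
  nlinarith

lemma c_plus_ne_zero {ℓ k : ℕ} : (1 + (ℓ : ℚ) ^ k) ≠ 0 := by positivity

lemma val_c_minus_nonneg {ℓ k : ℕ} : 0 ≤ padicValRat p (1 - (ℓ : ℚ) ^ k) := by
  have hcast : ((1 - (ℓ : ℤ) ^ k : ℤ) : ℚ) = 1 - (ℓ : ℚ) ^ k := by push_cast; ring
  rw [← hcast]; exact val_int_nonneg _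

lemma val_c_plus_nonneg {ℓ k : ℕ} : 0 ≤ padicValRat p (1 + (ℓ : ℚ) ^ k) := by
  have hcast : ((1 + (ℓ : ℤ) ^ k : ℤ) : ℚ) = 1 + (ℓ : ℚ) ^ k := by push_cast; ring
  rw [← hcast]; exact val_int_nonneg _



/-- `H_{2n} = (1 - ℓ^{2n}) B_{2n} / (2n)`. -/
noncomputable def Hnum (ℓ : ℕ) (n : ℕ) : ℚ :=
  (1 - (ℓ : ℚ) ^ (2 * n)) * bernoulli (2 * n) / (2 * n)

/-- `H⁻_{2n} = (1 - ℓ^n) B_{2n} / (2n)`. -/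
noncomputable def HnumMinus (ℓ : ℕ) (n : ℕ) : ℚ :=
  (1 - (ℓ : ℚ) ^ n) * bernoulli (2 * n) / (2 * n)

/-- `H⁺_{2n} = (1 + ℓ^n) B_{2n} / (2n)`. -/
noncomputable def HnumPlus (ℓ : ℕ) (n : ℕ) : ℚ :=
  (1 + (ℓ : ℚ) ^ n) * bernoulli (2 * n) / (2 * n)

/-- An odd prime `p` is `B`-irregular if `ν_p(B_{2k}) ≥ 1` for some
`1 ≤ k ≤ (p-3)/2`. -/
def BIrregular (p : ℕ) : Prop :=
  ∃ k : ℕ, 1 ≤ k ∧ k ≤ (p - 3) / 2 ∧ 1 ≤ padicValRat p (bernoulli (2 * k))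

/-- `A`-irregularity for a sequence `A` indexed so that `A n` is the `2n`-th term. -/
noncomputable def SeqIrregular (A : ℕ → ℚ) (p : ℕ) : Prop :=
  ∃ k : ℕ, 1 ≤ k ∧ k ≤ (p - 3) / 2 ∧ 1 ≤ padicValRat p (A k)

end PadicAux

/-- Let `ℓ` be a prime and `p ≠ ℓ` an odd prime, and write `ord = ord_p(ℓ)`. Then:
(1) `p` is `H⁻`-irregular iff `p` is `B`-irregular or `ord < (p-1)/2`;
(2) `p` is `H⁺`-irregular iff `p` is `B`-irregular or `ord` is even and `≠ p - 1`;
(3) `p` is `H`-irregular iff `p` is `H⁻`-irregular or `H⁺`-irregular;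
(4) if `p` is `B`-regular, `p ≡ 3 (mod 4)` and `ord = (p-1)/2`, then `p` is both
`H⁻`-regular and `H⁺`-regular. -/
theorem HpmIrregular_iff (ℓ p : ℕ) (hℓ : ℓ.Prime) (hp : p.Prime) (hne : p ≠ ℓ)
    (hodd : Odd p) :
    (SeqIrregular (HnumMinus ℓ) p ↔
      BIrregular p ∨ orderOf (ℓ : ZMod p) < (p - 1) / 2) ∧
    (SeqIrregular (HnumPlus ℓ) p ↔
      BIrregular p ∨ (Even (orderOf (ℓ : ZMod p)) ∧ orderOf (ℓ : ZMod p) ≠ p - 1)) ∧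
    (SeqIrregular (Hnum ℓ) p ↔
      SeqIrregular (HnumMinus ℓ) p ∨ SeqIrregular (HnumPlus ℓ) p) ∧
    (¬ BIrregular p → p % 4 = 3 → orderOf (ℓ : ZMod p) = (p - 1) / 2 →
      ¬ SeqIrregular (HnumMinus ℓ) p ∧ ¬ SeqIrregular (HnumPlus ℓ) p) := by
  haveI : Fact p.Prime := ⟨hp⟩
  have hpm2 : p % 2 = 1 := Nat.odd_iff.mp hodd
  have hp3 : 3 ≤ p := by have := hp.two_le; omega
  have hp2 : p ≠ 2 := by omega
  have hℓ2 : 2 ≤ ℓ := hℓ.two_le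
  have hℓ0 : (ℓ : ZMod p) ≠ 0 := by
    rw [Ne, ZMod.natCast_eq_zero_iff]
    intro hdv
    exact hne ((Nat.prime_dvd_prime_iff_eq hp hℓ).mp hdv)
  set d := orderOf (ℓ : ZMod p) with hd
  have hpow1 : (ℓ : ZMod p) ^ (p - 1) = 1 := ZMod.pow_card_sub_one_eq_one hℓ0
  have hdpos : 0 < d :=
    orderOf_pos_iff.mpr (isOfFinOrder_iff_pow_eq_one.mpr ⟨p - 1, by omega, hpow1⟩)
  have hddvd : d ∣ p - 1 := orderOf_dvd_of_pow_eq_one hpow1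
  have hne11 : (-1 : ZMod p) ≠ 1 := by
    intro h
    have h2 : ((2 : ℕ) : ZMod p) = 0 := by push_cast; linear_combination -h
    rw [ZMod.natCast_eq_zero_iff] at h2
    have := (Nat.prime_dvd_prime_iff_eq hp Nat.prime_two).mp h2
    omega
  have key : ∀ k, 1 ≤ k → k ≤ (p - 3) / 2 →
      (1 ≤ padicValRat p (HnumMinus ℓ k) ↔
        1 ≤ padicValRat p (bernoulli (2 * k)) ∨ (ℓ : ZMod p) ^ k = 1) ∧
      (1 ≤ padicValRat p (HnumPlus ℓ k) ↔
        1 ≤ padicValRat p (bernoulli (2 * k)) ∨ (ℓ : ZMod p) ^ k = -1) ∧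
      (1 ≤ padicValRat p (Hnum ℓ k) ↔
        1 ≤ padicValRat p (HnumMinus ℓ k) ∨ 1 ≤ padicValRat p (HnumPlus ℓ k)) := by
    intro k hk1 hk2
    have h2k3 : 2 * k ≤ p - 3 := by omega
    have hvB : 0 ≤ padicValRat p (bernoulli (2 * k)) := val_bernoulli_nonneg hp2 h2k3
    have hcm : (1 - (ℓ : ℚ) ^ k) ≠ 0 := c_minus_ne_zero hℓ2 hk1
    have hcp : (1 + (ℓ : ℚ) ^ k) ≠ 0 := c_plus_ne_zero
    have hvam : 0 ≤ padicValRat p (1 - (ℓ : ℚ) ^ k) := val_c_minus_nonneg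
    have hvap : 0 ≤ padicValRat p (1 + (ℓ : ℚ) ^ k) := val_c_plus_nonneg
    have e1 : padicValRat p (HnumMinus ℓ k) =
        padicValRat p (1 - (ℓ : ℚ) ^ k) + padicValRat p (bernoulli (2 * k)) := by
      rw [HnumMinus]; push_cast; exact val_H hk1 hk2 hcm
    have e2 : padicValRat p (HnumPlus ℓ k) =
        padicValRat p (1 + (ℓ : ℚ) ^ k) + padicValRat p (bernoulli (2 * k)) := by
      rw [HnumPlus]; push_cast; exact val_H hk1 hk2 hcp
    have hfac : (1 - (ℓ : ℚ) ^ (2 * k)) = (1 - (ℓ : ℚ) ^ k) * (1 + (ℓ : ℚ) ^ k) := by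
      rw [show 2 * k = k * 2 by ring, pow_mul]; ring
    have e3 : padicValRat p (Hnum ℓ k) =
        (padicValRat p (1 - (ℓ : ℚ) ^ k) + padicValRat p (1 + (ℓ : ℚ) ^ k)) +
          padicValRat p (bernoulli (2 * k)) := by
      rw [Hnum]; push_cast
      rw [show ((1 : ℚ) - (ℓ : ℚ) ^ (2 * k)) = (1 - (ℓ : ℚ) ^ k) * (1 + (ℓ : ℚ) ^ k) from hfac,
        ← padicValRat.mul hcm hcp]
      exact val_H hk1 hk2 (mul_ne_zero hcm hcp)
    refine ⟨?_, ?_, ?_⟩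
    · rw [e1, ← cond_minus hℓ2 hk1]; omega
    · rw [e2, ← cond_plus hℓ2 hk1]; omega
    · rw [e1, e2, e3]; omega
  have main1 : SeqIrregular (HnumMinus ℓ) p ↔ BIrregular p ∨ d < (p - 1) / 2 := by
    constructor
    · rintro ⟨k, hk1, hk2, hv⟩
      rcases ((key k hk1 hk2).1).mp hv with h | h
      · exact Or.inl ⟨k, hk1, hk2, h⟩
      · have hdk : d ∣ k := orderOf_dvd_of_pow_eq_one h
        have := Nat.le_of_dvd (by omega) hdk
        right; omega
    · rintro (⟨k, hk1, hk2, hB⟩ | hlt)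
      · exact ⟨k, hk1, hk2, ((key k hk1 hk2).1).mpr (Or.inl hB)⟩
      · exact ⟨d, hdpos, by omega,
          ((key d hdpos (by omega)).1).mpr (Or.inr (pow_orderOf_eq_one _))⟩
  have main2 : SeqIrregular (HnumPlus ℓ) p ↔ BIrregular p ∨ (Even d ∧ d ≠ p - 1) := by
    constructor
    · rintro ⟨k, hk1, hk2, hv⟩
      rcases ((key k hk1 hk2).2.1).mp hv with h | h
      · exact Or.inl ⟨k, hk1, hk2, h⟩
      · right
        have hd2k : d ∣ 2 * k := by
          apply orderOf_dvd_of_pow_eq_one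
          rw [show 2 * k = k * 2 by ring, pow_mul, h]
          ring
        have hndk : ¬ d ∣ k := by
          intro hdk
          have h1 : (ℓ : ZMod p) ^ k = 1 := orderOf_dvd_iff_pow_eq_one.mp hdk
          rw [h] at h1
          exact hne11 h1
        have heven : Even d := by
          by_contra hodd'
          have hcop : Nat.Coprime d 2 :=
            (Nat.not_even_iff_odd.mp hodd').coprime_two_right
          exact hndk (hcop.dvd_of_dvd_mul_left hd2k)
        refine ⟨heven, ?_⟩
        obtain ⟨m, hm⟩ := heven
        have hmk : m ∣ k := by
          have h2 : 2 * m ∣ 2 * k := by rw [show 2 * m = d by omega]; exact hd2k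
          exact (Nat.mul_dvd_mul_iff_left (by omega : 0 < 2)).mp h2
        have := Nat.le_of_dvd (by omega) hmk
        omega
    · rintro (⟨k, hk1, hk2, hB⟩ | ⟨heven, hne1⟩)
      · exact ⟨k, hk1, hk2, ((key k hk1 hk2).2.1).mpr (Or.inl hB)⟩
      · obtain ⟨m, hm⟩ := heven
        have hdlt : d < p - 1 := lt_of_le_of_ne (Nat.le_of_dvd (by omega) hddvd) hne1
        have hd2 : 2 * d ≤ p - 1 := by
          obtain ⟨c, hc⟩ := hddvd
          rcases Nat.lt_or_ge c 2 with hc2 | hc2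
          · interval_cases c <;> omega
          · have := Nat.mul_le_mul_left d hc2
            omega
        have hm1 : 1 ≤ m := by omega
        have hmk : m ≤ (p - 3) / 2 := by omega
        have hx2 : ((ℓ : ZMod p) ^ m) ^ 2 = 1 := by
          rw [← pow_mul, show m * 2 = d by omega]
          exact pow_orderOf_eq_one _
        have hxne : (ℓ : ZMod p) ^ m ≠ 1 :=
          pow_ne_one_of_lt_orderOf (by omega) (by omega)
        have hx : (ℓ : ZMod p) ^ m = -1 := by
          have hfac : ((ℓ : ZMod p) ^ m - 1) * ((ℓ : ZMod p) ^ m + 1) = 0 := by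
            linear_combination hx2
          rcases mul_eq_zero.mp hfac with h | h
          · exact absurd (by linear_combination h) hxne
          · linear_combination h
        exact ⟨m, hm1, hmk, ((key m hm1 hmk).2.1).mpr (Or.inr hx)⟩
  have main3 : SeqIrregular (Hnum ℓ) p ↔
      SeqIrregular (HnumMinus ℓ) p ∨ SeqIrregular (HnumPlus ℓ) p := by
    constructor
    · rintro ⟨k, hk1, hk2, hv⟩
      rcases ((key k hk1 hk2).2.2).mp hv with h | h
      · exact Or.inl ⟨k, hk1, hk2, h⟩
      · exact Or.inr ⟨k, hk1, hk2, h⟩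
    · rintro (⟨k, hk1, hk2, hv⟩ | ⟨k, hk1, hk2, hv⟩)
      · exact ⟨k, hk1, hk2, ((key k hk1 hk2).2.2).mpr (Or.inl hv)⟩
      · exact ⟨k, hk1, hk2, ((key k hk1 hk2).2.2).mpr (Or.inr hv)⟩
  refine ⟨main1, main2, main3, ?_⟩
  intro hB h4 hord
  constructor
  · rw [main1]
    rintro (h | h)
    · exact hB h
    · omega
  · rw [main2]
    rintro (h | ⟨he, hne'⟩)
    · exact hB h
    · rw [Nat.even_iff] at he
      omega
end

section
/- Let ℓ be a fixed prime. For every prime p (with p ≠ ℓ in case ℓ ≤ 3), there exists an integer n ≥ 1 such that ν_p(G_{2n}) ≥ 1. If ℓ ≤ 3, then ν_ℓ(G_{2n}) = 0 for every n ≥ 1. -/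
/-- The `ℓ`-Genocchi number `G_{2n} = ℓ(1 - ℓ^{2n})B_{2n}` (an integer). -/
noncomputable def Gnum (ℓ : ℕ) (n : ℕ) : ℚ :=
  (ℓ : ℚ) * (1 - (ℓ : ℚ) ^ (2 * n)) * bernoulli (2 * n)

/-!
By von Staudt–Clausen, `B_{2k} + 1/p` is `p`-integral when `(p - 1) ∣ 2k` and `B_{2k}` is
`p`-integral otherwise; hence `ν_p(B_{2k}) ≥ -1` always, with equality when `(p - 1) ∣ 2k`.
For `p ≠ ℓ`, Euler's theorem gives `p² ∣ 1 - ℓ^{2n}` for `n = φ(p²)`, so `ν_p(G_{2n}) ≥ 2 - 1`.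
For `p = ℓ ≥ 5`, `G_2 = ℓ(1 - ℓ²)/6` has `ν_ℓ(G_2) = 1`. For `ℓ ≤ 3` we have `(ℓ - 1) ∣ 2n`,
so `ν_ℓ(G_{2n}) = 1 + 0 - 1 = 0`.

The valuations are computed with `padicNorm`, which is multiplicative and ultrametric without
the nonvanishing side conditions of `padicValRat`.
-/

open Finset

section

variable {p : ℕ} [hp : Fact p.Prime]

theorem le_padicValRat_iff_padicNorm_le {q : ℚ} (hq : q ≠ 0) {n : ℤ} :
    n ≤ padicValRat p q ↔ padicNorm p q ≤ (p : ℚ) ^ (-n) := by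
  rw [padicNorm.eq_zpow_of_nonzero hq, zpow_le_zpow_iff_right₀ (by exact_mod_cast hp.out.one_lt),
    neg_le_neg_iff]

theorem padicValRat_eq_iff_padicNorm_eq {q : ℚ} (hq : q ≠ 0) {n : ℤ} :
    padicValRat p q = n ↔ padicNorm p q = (p : ℚ) ^ (-n) := by
  rw [padicNorm.eq_zpow_of_nonzero hq, zpow_right_inj₀ (by exact_mod_cast hp.out.pos)
    (by exact_mod_cast hp.out.ne_one), neg_inj]

theorem padicNorm_bernoulli_two_mul_add_le_one {k : ℕ} (hk : 0 < k) :
    padicNorm p (bernoulli (2 * k) + if (p - 1) ∣ 2 * k then (p : ℚ)⁻¹ else 0) ≤ 1 := by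
  obtain ⟨N, hN⟩ := Bernoulli.vonStaudt_clausen k
  set S := (range (2 * k + 2)).filter fun q => q.Prime ∧ (q - 1) ∣ 2 * k
  have hsplit : ∑ q ∈ S, (1 : ℚ) / q =
      (if (p - 1) ∣ 2 * k then (p : ℚ)⁻¹ else 0) + ∑ q ∈ S with q ≠ p, (1 : ℚ) / q := by
    have hmem : p ∈ S ↔ (p - 1) ∣ 2 * k := by
      simp only [S, mem_filter, mem_range, hp.out, true_and, and_iff_right_iff_imp]
      intro h
      have := Nat.le_of_dvd (by omega) h
      omega
    rw [← sum_filter_add_sum_filter_not S (· = p), filter_eq']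
    by_cases h : (p - 1) ∣ 2 * k <;> simp [h, hmem]
  have hrest : padicNorm p (∑ q ∈ S with q ≠ p, (1 : ℚ) / q) ≤ 1 := by
    refine padicNorm.sum_le' (fun q hq => ?_) zero_le_one
    simp only [S, mem_filter] at hq
    rw [padicNorm.div, padicNorm.one, (padicNorm.nat_eq_one_iff q).2, div_one]
    exact fun hpq => hq.2 ((hq.1.2.1.eq_one_or_self_of_dvd p hpq).resolve_left hp.out.ne_one).symm
  have hB : bernoulli (2 * k) + (if (p - 1) ∣ 2 * k then (p : ℚ)⁻¹ else 0) =
      N - ∑ q ∈ S with q ≠ p, (1 : ℚ) / q := by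
    linarith
  rw [hB]
  exact padicNorm.sub.trans (max_le (padicNorm.of_int N) hrest)

theorem padicNorm_bernoulli_two_mul_of_sub_one_dvd {k : ℕ} (hk : 0 < k)
    (hdvd : (p - 1) ∣ 2 * k) : padicNorm p (bernoulli (2 * k)) = p := by
  have hint := padicNorm_bernoulli_two_mul_add_le_one (p := p) hk
  rw [if_pos hdvd] at hint
  have hinv : padicNorm p (p : ℚ)⁻¹ = p := by
    rw [inv_eq_one_div, padicNorm.div, padicNorm.one, padicNorm.padicNorm_p_of_prime, one_div,
      inv_inv]
  have hlt : padicNorm p (bernoulli (2 * k) + (p : ℚ)⁻¹) < padicNorm p (-(p : ℚ)⁻¹) := by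
    rw [padicNorm.neg, hinv]
    exact hint.trans_lt (by exact_mod_cast hp.out.one_lt)
  calc padicNorm p (bernoulli (2 * k))
      = padicNorm p ((bernoulli (2 * k) + (p : ℚ)⁻¹) + -(p : ℚ)⁻¹) := by ring_nf
    _ = p := by rw [padicNorm.add_eq_max_of_ne hlt.ne, max_eq_right hlt.le, padicNorm.neg, hinv]

theorem padicNorm_bernoulli_two_mul_le (k : ℕ) : padicNorm p (bernoulli (2 * k)) ≤ p := by
  have hp1 : (1 : ℚ) ≤ p := by exact_mod_cast hp.out.one_le
  rcases Nat.eq_zero_or_pos k with rfl | hk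
  · simpa using hp1
  by_cases hdvd : (p - 1) ∣ 2 * k
  · exact (padicNorm_bernoulli_two_mul_of_sub_one_dvd hk hdvd).le
  · simpa [hdvd] using (padicNorm_bernoulli_two_mul_add_le_one (p := p) hk).trans hp1

theorem padicNorm_one_sub_pow_of_dvd {a : ℤ} (hpa : (p : ℤ) ∣ a) {m : ℕ} (hm : 0 < m) :
    padicNorm p (1 - (a : ℚ) ^ m) = 1 := by
  have hcast : (1 - (a : ℚ) ^ m) = ((1 - a ^ m : ℤ) : ℚ) := by push_cast; ring
  rw [hcast, padicNorm.int_eq_one_iff]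
  intro h
  have h1 : (p : ℤ) ∣ 1 := by simpa using dvd_add h (dvd_pow hpa hm.ne')
  exact hp.out.not_dvd_one (by exact_mod_cast h1)

theorem padicNorm_one_sub_pow_le {a : ℕ} (ha : a.Coprime p) {e m : ℕ}
    (hm : (p ^ e).totient ∣ m) : padicNorm p (1 - (a : ℚ) ^ m) ≤ (p : ℚ) ^ (-(e : ℤ)) := by
  obtain ⟨c, rfl⟩ := hm
  have hmod : a ^ ((p ^ e).totient * c) ≡ 1 [MOD p ^ e] := by
    simpa [pow_mul] using (Nat.ModEq.pow_totient (ha.pow_right e)).pow c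
  have hcast : (1 - (a : ℚ) ^ ((p ^ e).totient * c)) =
      ((1 - (a : ℤ) ^ ((p ^ e).totient * c) : ℤ) : ℚ) := by
    push_cast; ring
  rw [hcast, ← padicNorm.dvd_iff_norm_le]
  exact_mod_cast hmod.dvd

end

theorem bernoulli_two_mul_ne_zero {k : ℕ} (hk : 0 < k) : bernoulli (2 * k) ≠ 0 := by
  have : Fact (Nat.Prime 2) := ⟨Nat.prime_two⟩
  intro h
  have := padicNorm_bernoulli_two_mul_of_sub_one_dvd (p := 2) hk (one_dvd _)
  simp [h] at this

theorem Gnum_ne_zero {ℓ n : ℕ} (hℓ : 1 < ℓ) (hn : 0 < n) : Gnum ℓ n ≠ 0 := by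
  have hpow : (1 : ℚ) < (ℓ : ℚ) ^ (2 * n) := one_lt_pow₀ (by exact_mod_cast hℓ) (by omega)
  exact mul_ne_zero (mul_ne_zero (by positivity) (sub_ne_zero.2 hpow.ne))
    (bernoulli_two_mul_ne_zero hn)

section

variable {p : ℕ} [hp : Fact p.Prime]

theorem padicNorm_Gnum (ℓ n : ℕ) : padicNorm p (Gnum ℓ n) =
    padicNorm p ℓ * padicNorm p (1 - (ℓ : ℚ) ^ (2 * n)) * padicNorm p (bernoulli (2 * n)) := by
  simp only [Gnum, padicNorm.mul]

theorem one_le_padicValRat_Gnum_totient {ℓ : ℕ} (hℓ : 1 < ℓ) (hℓp : ℓ.Coprime p) :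
    1 ≤ padicValRat p (Gnum ℓ (p ^ 2).totient) := by
  set n := (p ^ 2).totient
  have hp0 : (0 : ℚ) < p := by exact_mod_cast hp.out.pos
  have hℓ_unit : padicNorm p ℓ = 1 :=
    (padicNorm.nat_eq_one_iff ℓ).2 ((Nat.Prime.coprime_iff_not_dvd hp.out).1 hℓp.symm)
  rw [le_padicValRat_iff_padicNorm_le (Gnum_ne_zero hℓ (Nat.totient_pos.2 (pow_pos hp.out.pos 2))),
    padicNorm_Gnum, hℓ_unit, one_mul]
  calc padicNorm p (1 - (ℓ : ℚ) ^ (2 * n)) * padicNorm p (bernoulli (2 * n))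
      ≤ (p : ℚ) ^ (-(2 : ℤ)) * p :=
        mul_le_mul (padicNorm_one_sub_pow_le hℓp (dvd_mul_left _ _))
          (padicNorm_bernoulli_two_mul_le _) (padicNorm.nonneg _) (by positivity)
    _ = (p : ℚ) ^ (-(1 : ℤ)) := by
        rw [← zpow_add_one₀ hp0.ne']; norm_num

theorem padicValRat_Gnum_one_self (hp3 : 3 < p) : padicValRat p (Gnum p 1) = 1 := by
  have hp6 : ¬ p ∣ 6 := fun h => by
    rcases hp.out.dvd_mul.1 (show p ∣ 2 * 3 from h) with h | h <;>
      have := Nat.le_of_dvd (by norm_num) h <;> omega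
  rw [padicValRat_eq_iff_padicNorm_eq (Gnum_ne_zero hp.out.one_lt one_pos), padicNorm_Gnum,
    padicNorm.padicNorm_p_of_prime, mul_one, bernoulli_two, inv_eq_one_div (6 : ℚ), padicNorm.div,
    padicNorm.one, show (6 : ℚ) = (6 : ℕ) by norm_num, (padicNorm.nat_eq_one_iff 6).2 hp6,
    show padicNorm p (1 - (p : ℚ) ^ 2) = 1 by
      exact_mod_cast padicNorm_one_sub_pow_of_dvd (a := p) dvd_rfl two_pos]
  simp

theorem padicValRat_Gnum_self {n : ℕ} (hn : 0 < n) (hdvd : (p - 1) ∣ 2 * n) :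
    padicValRat p (Gnum p n) = 0 := by
  have hp0 : (p : ℚ) ≠ 0 := by exact_mod_cast hp.out.ne_zero
  rw [padicValRat_eq_iff_padicNorm_eq (Gnum_ne_zero hp.out.one_lt hn), padicNorm_Gnum,
    padicNorm.padicNorm_p_of_prime, padicNorm_bernoulli_two_mul_of_sub_one_dvd hn hdvd,
    show padicNorm p (1 - (p : ℚ) ^ (2 * n)) = 1 by
      exact_mod_cast padicNorm_one_sub_pow_of_dvd (a := p) dvd_rfl (by omega : 0 < 2 * n),
    mul_one, inv_mul_cancel₀ hp0, neg_zero, zpow_zero]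

end

/-- Let `ℓ` be a fixed prime. For every prime `p` (with `p ≠ ℓ` in case `ℓ ≤ 3`),
there exists `n ≥ 1` with `ν_p(G_{2n}) ≥ 1`. If `ℓ ≤ 3`, then `ν_ℓ(G_{2n}) = 0`
for every `n ≥ 1`. -/
theorem exists_padicValRat_Gnum_pos (ℓ : ℕ) (hℓ : ℓ.Prime) :
    (∀ p : ℕ, p.Prime → (ℓ ≤ 3 → p ≠ ℓ) →
      ∃ n : ℕ, 1 ≤ n ∧ 1 ≤ padicValRat p (Gnum ℓ n)) ∧
    (ℓ ≤ 3 → ∀ n : ℕ, 1 ≤ n → padicValRat ℓ (Gnum ℓ n) = 0) := by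
  have : Fact ℓ.Prime := ⟨hℓ⟩
  refine ⟨fun p hp hpℓ => ?_, fun hℓ3 n hn => padicValRat_Gnum_self hn ?_⟩
  · have : Fact p.Prime := ⟨hp⟩
    by_cases h : p = ℓ
    · subst h
      exact ⟨1, le_rfl, (padicValRat_Gnum_one_self (not_le.1 fun h3 => hpℓ h3 rfl)).ge⟩
    · exact ⟨(p ^ 2).totient, Nat.totient_pos.2 (pow_pos hp.pos 2),
        one_le_padicValRat_Gnum_totient hℓ.one_lt ((Nat.coprime_primes hℓ hp).2 (Ne.symm h))⟩
  · have hℓ_sub_one : ℓ - 1 ∣ 2 := by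
      have := hℓ.two_le
      interval_cases ℓ <;> norm_num
    exact hℓ_sub_one.trans (dvd_mul_right 2 n)
end
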